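/- Let A(X) = ∑_{|α| ≥ 2} A_α X^α be a formal power series in variables X = (X¹,...,X^r) whose coefficients are defined recursively by the functional equation A(X) = 2K·A(X)·(-1 + ∏_{λ=1}^r 1/(1 - R(X^λ + A(X)))) + 2KM·(-1 - R(X¹+⋯+X^r + rA(X)) + ∏_{λ=1}^r 1/(1 - R(X^λ + A(X)))), with K, M, R > 0. Then every coefficient A_α is uniquely determined and is a positive real number; in particular A_α = 2KMR² for every α with |α| = 2. -/

import Mathlib

open MvPowerSeries Finset

namespace Stmt7

noncomputable section

variable {r : ℕ}

abbrev PS (r : ℕ) := MvPowerSeries (Fin r) ℝ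

/-- total degree of a multi-index -/
def dg (d : Fin r →₀ ℕ) : ℕ := ∑ i, d i

lemma dg_add (a b : Fin r →₀ ℕ) : dg (a + b) = dg a + dg b := by
  simp [dg, Finsupp.add_apply, Finset.sum_add_distrib]

lemma dg_zero : dg (0 : Fin r →₀ ℕ) = 0 := by simp [dg]

lemma eq_zero_of_dg (d : Fin r →₀ ℕ) (h : dg d = 0) : d = 0 := by
  ext i
  have := Finset.sum_eq_zero_iff.mp h i (Finset.mem_univ i)
  simpa using this

lemma one_le_dg {d : Fin r →₀ ℕ} (h : d ≠ 0) : 1 ≤ dg d := by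
  rcases Nat.eq_zero_or_pos (dg d) with h0 | h1
  · exact absurd (eq_zero_of_dg d h0) h
  · exact h1

lemma dg_single (l : Fin r) (k : ℕ) : dg (Finsupp.single l k) = k := by
  classical
  simp [dg, Finsupp.single_apply]

/-- coefficients agree in all total degrees `≤ n` -/
def Ceq (n : ℕ) (F G : PS r) : Prop :=
  ∀ d : Fin r →₀ ℕ, dg d ≤ n → coeff (R := ℝ) d F = coeff (R := ℝ) d G

/-- all coefficients nonnegative -/
def NN (F : PS r) : Prop := ∀ d : Fin r →₀ ℕ, 0 ≤ coeff (R := ℝ) d F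

lemma Ceq.refl (n : ℕ) (F : PS r) : Ceq n F F := fun _ _ => rfl

lemma Ceq.mono {n m : ℕ} {F G : PS r} (h : Ceq n F G) (hm : m ≤ n) : Ceq m F G :=
  fun d hd => h d (hd.trans hm)

lemma Ceq.add {n : ℕ} {F G F' G' : PS r} (h : Ceq n F F') (h' : Ceq n G G') :
    Ceq n (F + G) (F' + G') := by
  intro d hd
  simp only [map_add, h d hd, h' d hd]

lemma Ceq.sub {n : ℕ} {F G F' G' : PS r} (h : Ceq n F F') (h' : Ceq n G G') :
    Ceq n (F - G) (F' - G') := by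
  intro d hd
  simp only [map_sub, h d hd, h' d hd]

lemma Ceq.trans {n : ℕ} {F G H : PS r} (h : Ceq n F G) (h' : Ceq n G H) : Ceq n F H :=
  fun d hd => (h d hd).trans (h' d hd)

lemma Ceq.sum {n : ℕ} {s : Finset (Fin r)} {f f' : Fin r → PS r}
    (h : ∀ l ∈ s, Ceq n (f l) (f' l)) :
    Ceq n (∑ l ∈ s, f l) (∑ l ∈ s, f' l) := by
  intro d hd
  rw [map_sum, map_sum]
  exact Finset.sum_congr rfl fun l hl => h l hl d hd

/-- multiplication respects `Ceq n` -/
lemma Ceq.mul {n : ℕ} {F G F' G' : PS r} (h : Ceq n F F') (h' : Ceq n G G') :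
    Ceq n (F * G) (F' * G') := by
  intro d hd
  classical
  rw [coeff_mul, coeff_mul]
  refine Finset.sum_congr rfl fun p hp => ?_
  rw [Finset.HasAntidiagonal.mem_antidiagonal] at hp
  have h1 : dg p.1 ≤ n := by
    have : dg p.1 ≤ dg d := by rw [← hp, dg_add]; omega
    omega
  have h2 : dg p.2 ≤ n := by
    have : dg p.2 ≤ dg d := by rw [← hp, dg_add]; omega
    omega
  rw [h p.1 h1, h' p.2 h2]

lemma Ceq.prod {n : ℕ} {s : Finset (Fin r)} {f f' : Fin r → PS r}
    (h : ∀ l ∈ s, Ceq n (f l) (f' l)) :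
    Ceq n (∏ l ∈ s, f l) (∏ l ∈ s, f' l) := by
  classical
  induction s using Finset.induction_on with
  | empty => simp only [Finset.prod_empty]; exact Ceq.refl n 1
  | insert _ _ ha ih =>
    rw [Finset.prod_insert ha, Finset.prod_insert ha]
    exact Ceq.mul (h _ (Finset.mem_insert_self _ _))
      (ih fun l hl => h l (Finset.mem_insert_of_mem hl))

/-- the key product lemma: factors of order ≥ 1 gain one degree of congruence -/
lemma Ceq.mulo {n : ℕ} {F G F' G' : PS r}
    (hF : constantCoeff (σ := Fin r) (R := ℝ) F = 0) (hF' : constantCoeff (σ := Fin r) (R := ℝ) F' = 0)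
    (hG : constantCoeff (σ := Fin r) (R := ℝ) G = 0) (hG' : constantCoeff (σ := Fin r) (R := ℝ) G' = 0)
    (h : Ceq n F F') (h' : Ceq n G G') :
    Ceq (n + 1) (F * G) (F' * G') := by
  intro d hd
  classical
  rw [coeff_mul, coeff_mul]
  refine Finset.sum_congr rfl fun p hp => ?_
  rw [Finset.HasAntidiagonal.mem_antidiagonal] at hp
  by_cases h1 : p.1 = 0
  · rw [h1]
    rw [show (coeff (R := ℝ) (0 : Fin r →₀ ℕ)) F = 0 by
        rw [coeff_zero_eq_constantCoeff]; exact hF,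
      show (coeff (R := ℝ) (0 : Fin r →₀ ℕ)) F' = 0 by
        rw [coeff_zero_eq_constantCoeff]; exact hF']
    simp
  by_cases h2 : p.2 = 0
  · rw [h2]
    rw [show (coeff (R := ℝ) (0 : Fin r →₀ ℕ)) G = 0 by
        rw [coeff_zero_eq_constantCoeff]; exact hG,
      show (coeff (R := ℝ) (0 : Fin r →₀ ℕ)) G' = 0 by
        rw [coeff_zero_eq_constantCoeff]; exact hG']
    simp
  have hd1 : 1 ≤ dg p.1 := one_le_dg h1
  have hd2 : 1 ≤ dg p.2 := one_le_dg h2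
  have hsum : dg p.1 + dg p.2 = dg d := by rw [← hp, dg_add]
  rw [h p.1 (by omega), h' p.2 (by omega)]

/-- coefficient of a product in degree ≤ 1 where the first factor has zero constant term -/
lemma coeff_mul_low {F G : PS r} (hF : constantCoeff (σ := Fin r) (R := ℝ) F = 0)
    (d : Fin r →₀ ℕ) (hd : dg d ≤ 1) :
    coeff (R := ℝ) d (F * G) = coeff (R := ℝ) d F * constantCoeff (σ := Fin r) (R := ℝ) G := by
  classical
  rw [coeff_mul]
  rw [← coeff_zero_eq_constantCoeff_apply]
  apply Finset.sum_eq_single (d, (0 : Fin r →₀ ℕ))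
  · intro p hp hne
    rw [Finset.HasAntidiagonal.mem_antidiagonal] at hp
    by_cases h1 : p.1 = 0
    · rw [h1, coeff_zero_eq_constantCoeff_apply, hF, zero_mul]
    · exfalso
      have hd1 : 1 ≤ dg p.1 := one_le_dg h1
      have hsum : dg p.1 + dg p.2 = dg d := by rw [← hp, dg_add]
      have h20 : dg p.2 = 0 := by omega
      have h2 : p.2 = 0 := eq_zero_of_dg _ h20
      apply hne
      have : p.1 = d := by rw [← hp, h2, add_zero]
      exact Prod.ext this h2
  · intro hmem
    exfalso; apply hmem
    rw [Finset.HasAntidiagonal.mem_antidiagonal]; exact add_zero d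

def uu (R : ℝ) (B : PS r) (l : Fin r) : PS r := C (σ := Fin r) (R := ℝ) R * (X l + B)
def ww (R : ℝ) (B : PS r) (l : Fin r) : PS r := (1 - uu R B l)⁻¹
def gg (R : ℝ) (B : PS r) (l : Fin r) : PS r := uu R B l * ww R B l

variable {R : ℝ} {B : PS r} {l : Fin r}

lemma const_uu (hB : constantCoeff (σ := Fin r) (R := ℝ) B = 0) :
    constantCoeff (σ := Fin r) (R := ℝ) (uu R B l) = 0 := by
  simp [uu, hB]

lemma ww_eq (hB : constantCoeff (σ := Fin r) (R := ℝ) B = 0) :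
    ww R B l = 1 + uu R B l * ww R B l := by
  have hc : constantCoeff (σ := Fin r) (R := ℝ) (1 - uu R B l) ≠ 0 := by
    rw [map_sub, map_one, const_uu hB, sub_zero]; exact one_ne_zero
  have h1 : (1 - uu R B l) * ww R B l = 1 :=
    MvPowerSeries.mul_inv_cancel _ hc
  linear_combination h1

lemma const_ww (hB : constantCoeff (σ := Fin r) (R := ℝ) B = 0) :
    constantCoeff (σ := Fin r) (R := ℝ) (ww R B l) = 1 := by
  have := congrArg (constantCoeff (σ := Fin r) (R := ℝ)) (ww_eq hB (l := l) (R := R))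
  rw [map_add, map_one, map_mul, const_uu hB, zero_mul] at this
  simpa using this

lemma const_gg (hB : constantCoeff (σ := Fin r) (R := ℝ) B = 0) :
    constantCoeff (σ := Fin r) (R := ℝ) (gg R B l) = 0 := by
  rw [gg, map_mul, const_uu hB, zero_mul]

lemma coeff_uu (d : Fin r →₀ ℕ) :
    coeff (R := ℝ) d (uu R B l) = R * (coeff (R := ℝ) d (X l) + coeff (R := ℝ) d B) := by
  rw [uu, coeff_C_mul, map_add]


lemma NN.mul {F G : PS r} (hF : NN F) (hG : NN G) : NN (F * G) := by
  intro d
  classical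
  rw [coeff_mul]
  exact Finset.sum_nonneg fun p _ => mul_nonneg (hF p.1) (hG p.2)

lemma NN.add {F G : PS r} (hF : NN F) (hG : NN G) : NN (F + G) := by
  intro d; rw [map_add]; exact add_nonneg (hF d) (hG d)

lemma NN.one : NN (1 : PS r) := by
  intro d; classical
  rw [coeff_one]
  split <;> norm_num

lemma NN.zero : NN (0 : PS r) := by intro d; simp

lemma NN.sum {s : Finset (Fin r)} {f : Fin r → PS r} (h : ∀ l ∈ s, NN (f l)) :
    NN (∑ l ∈ s, f l) := by
  classical
  induction s using Finset.induction_on with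
  | empty => simpa using NN.zero
  | insert _ _ ha ih =>
    rw [Finset.sum_insert ha]
    exact NN.add (h _ (Finset.mem_insert_self _ _))
      (ih fun l hl => h l (Finset.mem_insert_of_mem hl))

lemma NN.prod {s : Finset (Fin r)} {f : Fin r → PS r} (h : ∀ l ∈ s, NN (f l)) :
    NN (∏ l ∈ s, f l) := by
  classical
  induction s using Finset.induction_on with
  | empty => simpa using NN.one
  | insert _ _ ha ih =>
    rw [Finset.prod_insert ha]
    exact NN.mul (h _ (Finset.mem_insert_self _ _))
      (ih fun l hl => h l (Finset.mem_insert_of_mem hl))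

lemma NN_uu {R : ℝ} {B : PS r} {l : Fin r} (hR : 0 ≤ R) (hB : NN B) : NN (uu R B l) := by
  intro d
  rw [coeff_uu]
  apply mul_nonneg hR
  apply add_nonneg _ (hB d)
  classical
  rw [coeff_X]
  split <;> norm_num

lemma NN_ww {R : ℝ} {B : PS r} {l : Fin r} (hR : 0 ≤ R)
    (hB0 : constantCoeff (σ := Fin r) (R := ℝ) B = 0) (hB : NN B) : NN (ww R B l) := by
  suffices H : ∀ k : ℕ, ∀ d : Fin r →₀ ℕ, dg d = k → 0 ≤ coeff (R := ℝ) d (ww R B l) by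
    intro d; exact H (dg d) d rfl
  intro k
  induction k using Nat.strong_induction_on with
  | _ k IH =>
    intro d hd
    rw [ww_eq hB0, map_add]
    apply add_nonneg
    · classical
      rw [coeff_one]; split <;> norm_num
    · classical
      rw [coeff_mul]
      apply Finset.sum_nonneg
      intro p hp
      rw [Finset.HasAntidiagonal.mem_antidiagonal] at hp
      by_cases h1 : p.1 = 0
      · rw [h1, coeff_zero_eq_constantCoeff_apply, const_uu hB0, zero_mul]
      · apply mul_nonneg (NN_uu hR hB p.1)
        have hd1 : 1 ≤ dg p.1 := one_le_dg h1
        have hsum : dg p.1 + dg p.2 = dg d := by rw [← hp, dg_add]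
        exact IH (dg p.2) (by omega) p.2 rfl

lemma Ceq_uu {n : ℕ} {R : ℝ} {B B' : PS r} {l : Fin r} (h : Ceq n B B') :
    Ceq n (uu R B l) (uu R B' l) := by
  intro d hd
  rw [coeff_uu, coeff_uu, h d hd]

lemma Ceq_ww {n : ℕ} {R : ℝ} {B B' : PS r} {l : Fin r}
    (hB0 : constantCoeff (σ := Fin r) (R := ℝ) B = 0) (hB0' : constantCoeff (σ := Fin r) (R := ℝ) B' = 0)
    (h : Ceq n B B') : Ceq n (ww R B l) (ww R B' l) := by
  suffices H : ∀ k : ℕ, ∀ d : Fin r →₀ ℕ, dg d = k → dg d ≤ n →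
      coeff (R := ℝ) d (ww R B l) = coeff (R := ℝ) d (ww R B' l) by
    intro d hd; exact H (dg d) d rfl hd
  intro k
  induction k using Nat.strong_induction_on with
  | _ k IH =>
    intro d hd hdn
    rw [ww_eq hB0, ww_eq hB0', map_add, map_add]
    congr 1
    classical
    rw [coeff_mul, coeff_mul]
    refine Finset.sum_congr rfl fun p hp => ?_
    rw [Finset.HasAntidiagonal.mem_antidiagonal] at hp
    by_cases h1 : p.1 = 0
    · rw [h1, coeff_zero_eq_constantCoeff_apply, const_uu hB0,
        coeff_zero_eq_constantCoeff_apply, const_uu hB0']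
      simp
    · have hd1 : 1 ≤ dg p.1 := one_le_dg h1
      have hsum : dg p.1 + dg p.2 = dg d := by rw [← hp, dg_add]
      rw [Ceq_uu h p.1 (by omega), IH (dg p.2) (by omega) p.2 rfl (by omega)]

section Efacts
variable {h h' : Fin r → PS r}

lemma prod_insert_identity (f : Fin r → PS r) {a : Fin r} {s : Finset (Fin r)}
    (ha : a ∉ s) :
    (∏ l ∈ insert a s, (1 + f l)) - 1 - ∑ l ∈ insert a s, f l =
      ((∏ l ∈ s, (1 + f l)) - 1 - ∑ l ∈ s, f l) + f a * ((∏ l ∈ s, (1 + f l)) - 1) := by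
  rw [Finset.prod_insert ha, Finset.sum_insert ha]
  ring

lemma const_prod_one_add (h0 : ∀ l, constantCoeff (σ := Fin r) (R := ℝ) (h l) = 0)
    (s : Finset (Fin r)) :
    constantCoeff (σ := Fin r) (R := ℝ) ((∏ l ∈ s, (1 + h l)) - 1) = 0 := by
  rw [map_sub, map_one, map_prod]
  rw [Finset.prod_congr rfl fun l _ => by rw [map_add, map_one, h0 l, add_zero]]
  simp

lemma NN_prod_one_add_sub_one (hh : ∀ l, NN (h l))
    (h0 : ∀ l, constantCoeff (σ := Fin r) (R := ℝ) (h l) = 0) (t : Finset (Fin r)) :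
    NN ((∏ l ∈ t, (1 + h l)) - 1) := by
  intro d
  rw [map_sub]
  classical
  rw [coeff_one]
  split
  · next hd0 =>
    subst hd0
    have := const_prod_one_add h0 t
    rw [map_sub, map_one] at this
    rw [coeff_zero_eq_constantCoeff_apply]
    linarith
  · rw [sub_zero]
    exact NN.prod (fun l _ => NN.add NN.one (hh l)) d

lemma NN_E (hh : ∀ l, NN (h l)) (h0 : ∀ l, constantCoeff (σ := Fin r) (R := ℝ) (h l) = 0)
    (s : Finset (Fin r)) :
    NN ((∏ l ∈ s, (1 + h l)) - 1 - ∑ l ∈ s, h l) := by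
  classical
  induction s using Finset.induction_on with
  | empty => simpa using NN.zero
  | @insert a s ha ih =>
    rw [prod_insert_identity h ha]
    exact NN.add ih (NN.mul (hh a) (NN_prod_one_add_sub_one hh h0 s))

lemma Ceq_E {n : ℕ} (h0 : ∀ l, constantCoeff (σ := Fin r) (R := ℝ) (h l) = 0)
    (h0' : ∀ l, constantCoeff (σ := Fin r) (R := ℝ) (h' l) = 0)
    (hc : ∀ l, Ceq n (h l) (h' l)) (s : Finset (Fin r)) :
    Ceq (n + 1) ((∏ l ∈ s, (1 + h l)) - 1 - ∑ l ∈ s, h l)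
      ((∏ l ∈ s, (1 + h' l)) - 1 - ∑ l ∈ s, h' l) := by
  classical
  induction s using Finset.induction_on with
  | empty => simp only [Finset.prod_empty, Finset.sum_empty, sub_self, sub_zero]
             exact Ceq.refl _ _
  | @insert a s ha ih =>
    rw [prod_insert_identity h ha, prod_insert_identity h' ha]
    refine Ceq.add ih (Ceq.mulo (h0 a) (h0' a) (const_prod_one_add h0 s)
      (const_prod_one_add h0' s) (hc a) ?_)
    exact Ceq.sub (Ceq.prod fun l _ => Ceq.add (Ceq.refl n 1) (hc l)) (Ceq.refl n 1)

lemma Ceq_prod1 (h0 : ∀ l, constantCoeff (σ := Fin r) (R := ℝ) (h l) = 0) (s : Finset (Fin r)) :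
    Ceq 1 ((∏ l ∈ s, (1 + h l)) - 1) (∑ l ∈ s, h l) := by
  classical
  induction s using Finset.induction_on with
  | empty => simp only [Finset.prod_empty, Finset.sum_empty, sub_self]
             exact Ceq.refl _ _
  | @insert a s ha ih =>
    have hid : (∏ l ∈ insert a s, (1 + h l)) - 1 =
        ((∏ l ∈ s, (1 + h l)) - 1) + h a + h a * ((∏ l ∈ s, (1 + h l)) - 1) := by
      rw [Finset.prod_insert ha]; ring
    rw [hid, Finset.sum_insert ha]
    have c1 : Ceq 0 (h a) (0 : PS r) := by
      intro d hd
      have hd0 : d = 0 := eq_zero_of_dg d (Nat.le_zero.mp hd)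
      subst hd0
      rw [coeff_zero_eq_constantCoeff_apply, h0 a]; simp
    have c2 : Ceq 0 ((∏ l ∈ s, (1 + h l)) - 1) (0 : PS r) := by
      intro d hd
      have hd0 : d = 0 := eq_zero_of_dg d (Nat.le_zero.mp hd)
      subst hd0
      rw [coeff_zero_eq_constantCoeff_apply, const_prod_one_add h0 s]; simp
    have hz : Ceq 1 (h a * ((∏ l ∈ s, (1 + h l)) - 1)) ((0 : PS r) * 0) :=
      Ceq.mulo (h0 a) (by simp) (const_prod_one_add h0 s) (by simp) c1 c2
    intro d hd
    have e1 := ih d hd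
    have e2 := hz d hd
    simp only [zero_mul, map_zero] at e2
    simp only [map_add, e1, e2, add_zero]
    ring

lemma Ceq_E2 (h0 : ∀ l, constantCoeff (σ := Fin r) (R := ℝ) (h l) = 0) (s : Finset (Fin r)) :
    Ceq 2 ((∏ l ∈ s, (1 + h l)) - 1 - ∑ l ∈ s, h l)
      (C (σ := Fin r) (R := ℝ) (1/2) * ((∑ l ∈ s, h l) ^ 2 - ∑ l ∈ s, (h l) ^ 2)) := by
  classical
  have h2 : (C (σ := Fin r) (R := ℝ) (1/2)) * 2 = 1 := by
    rw [show (2 : PS r) = C (σ := Fin r) (R := ℝ) 2 from (map_ofNat _ 2).symm, ← map_mul]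
    norm_num
  induction s using Finset.induction_on with
  | empty =>
    have : C (σ := Fin r) (R := ℝ) (1/2) * (((0 : PS r)) ^ 2 - 0) = 0 := by ring
    simp only [Finset.prod_empty, Finset.sum_empty, sub_self, sub_zero, this]
    intro d hd; simp
  | @insert a s ha ih =>
    have hidR : C (σ := Fin r) (R := ℝ) (1/2) * ((∑ l ∈ insert a s, h l) ^ 2 -
          ∑ l ∈ insert a s, (h l) ^ 2) =
        C (σ := Fin r) (R := ℝ) (1/2) * ((∑ l ∈ s, h l) ^ 2 - ∑ l ∈ s, (h l) ^ 2) +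
          h a * (∑ l ∈ s, h l) := by
      rw [Finset.sum_insert ha, Finset.sum_insert ha]
      linear_combination ((∑ l ∈ s, h l) * h a) * h2
    rw [prod_insert_identity h ha, hidR]
    refine Ceq.add ih ?_
    exact Ceq.mulo (h0 a) (h0 a) (const_prod_one_add h0 s)
      (by rw [map_sum]; exact Finset.sum_eq_zero fun l _ => h0 l)
      (Ceq.refl 1 (h a)) (Ceq_prod1 h0 s)

end Efacts

def Phi (K M R : ℝ) (B : PS r) : PS r :=
  2 * C (σ := Fin r) (R := ℝ) K * B *
      (-1 + ∏ lam : Fin r, (1 - C (σ := Fin r) (R := ℝ) R * (X lam + B))⁻¹) +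
    2 * C (σ := Fin r) (R := ℝ) K * C (σ := Fin r) (R := ℝ) M *
      (-1 - C (σ := Fin r) (R := ℝ) R *
          ((∑ lam : Fin r, X lam) + C (σ := Fin r) (R := ℝ) (r : ℝ) * B) +
        ∏ lam : Fin r, (1 - C (σ := Fin r) (R := ℝ) R * (X lam + B))⁻¹)

/-- the "error" series: product minus one minus sum -/
def EE (R : ℝ) (B : PS r) : PS r :=
  (∏ l : Fin r, ww R B l) - 1 - ∑ l : Fin r, gg R B l

lemma Phi_eq (K M R : ℝ) (B : PS r) :
    Phi K M R B =
      2 * C (σ := Fin r) (R := ℝ) K * B * (-1 + ∏ lam : Fin r, ww R B lam) +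
        2 * C (σ := Fin r) (R := ℝ) K * C (σ := Fin r) (R := ℝ) M *
          (-1 - C (σ := Fin r) (R := ℝ) R *
              ((∑ lam : Fin r, X lam) + C (σ := Fin r) (R := ℝ) (r : ℝ) * B) +
            ∏ lam : Fin r, ww R B lam) := rfl

lemma gg_eq {R : ℝ} {B : PS r} {l : Fin r} (hB : constantCoeff (σ := Fin r) (R := ℝ) B = 0) :
    gg R B l = uu R B l + uu R B l * gg R B l := by
  have h := ww_eq (R := R) (l := l) hB
  show uu R B l * ww R B l = uu R B l + uu R B l * (uu R B l * ww R B l)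
  linear_combination (uu R B l) * h

lemma ww_eq_one_add_gg {R : ℝ} {B : PS r} (hB : constantCoeff (σ := Fin r) (R := ℝ) B = 0)
    (l : Fin r) : ww R B l = 1 + gg R B l := ww_eq hB

lemma sum_uu (R : ℝ) (B : PS r) :
    ∑ l : Fin r, uu R B l =
      C (σ := Fin r) (R := ℝ) R * ((∑ lam : Fin r, X lam) + C (σ := Fin r) (R := ℝ) (r : ℝ) * B) := by
  unfold uu
  rw [← Finset.mul_sum]
  congr 1
  have hconst : (∑ _l : Fin r, B) = C (σ := Fin r) (R := ℝ) (r : ℝ) * B := by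
    rw [Finset.sum_const, Finset.card_univ, Fintype.card_fin, nsmul_eq_mul,
      ← map_natCast (C (σ := Fin r) (R := ℝ)) r]
  rw [Finset.sum_add_distrib, hconst]

lemma Phi_decomp (K M R : ℝ) {B : PS r} (hB : constantCoeff (σ := Fin r) (R := ℝ) B = 0) :
    Phi K M R B =
      C (σ := Fin r) (R := ℝ) (2 * K) * (B * (-1 + ∏ lam : Fin r, ww R B lam)) +
        C (σ := Fin r) (R := ℝ) (2 * K * M) *
          ((∑ l : Fin r, uu R B l * gg R B l) + EE R B) := by
  have hC2K : C (σ := Fin r) (R := ℝ) (2 * K) = 2 * C (σ := Fin r) (R := ℝ) K := by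
    rw [map_mul, map_ofNat]
  have hC2KM : C (σ := Fin r) (R := ℝ) (2 * K * M) = 2 * C (σ := Fin r) (R := ℝ) K * C (σ := Fin r) (R := ℝ) M := by
    rw [map_mul, map_mul, map_ofNat]
  have hsum : ∑ l : Fin r, gg R B l =
      (∑ l : Fin r, uu R B l) + ∑ l : Fin r, uu R B l * gg R B l := by
    rw [← Finset.sum_add_distrib]
    exact Finset.sum_congr rfl fun l _ => gg_eq hB
  have husum := sum_uu (r := r) R B
  rw [Phi_eq, hC2K, hC2KM, EE]
  linear_combination (2 * C (σ := Fin r) (R := ℝ) K * C (σ := Fin r) (R := ℝ) M) * hsum +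
    (2 * C (σ := Fin r) (R := ℝ) K * C (σ := Fin r) (R := ℝ) M) * husum

/-- MAIN congruence: the functional equation improves congruence by one degree -/
lemma main_congr (K M R : ℝ) {n : ℕ} {B B' : PS r}
    (hB : constantCoeff (σ := Fin r) (R := ℝ) B = 0) (hB' : constantCoeff (σ := Fin r) (R := ℝ) B' = 0)
    (h : Ceq n B B') : Ceq (n + 1) (Phi K M R B) (Phi K M R B') := by
  have hww : ∀ l : Fin r, Ceq n (ww R B l) (ww R B' l) := fun l => Ceq_ww hB hB' h
  have hgg : ∀ l : Fin r, Ceq n (gg R B l) (gg R B' l) :=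
    fun l => Ceq.mul (Ceq_uu h) (hww l)
  have hP : Ceq n (∏ lam : Fin r, ww R B lam) (∏ lam : Fin r, ww R B' lam) :=
    Ceq.prod fun l _ => hww l
  -- term 1
  have t1 : Ceq (n + 1) (B * (-1 + ∏ lam : Fin r, ww R B lam))
      (B' * (-1 + ∏ lam : Fin r, ww R B' lam)) := by
    refine Ceq.mulo hB hB' ?_ ?_ h ?_
    · rw [map_add, map_prod]
      rw [Finset.prod_congr rfl fun l (_ : l ∈ Finset.univ) => const_ww hB (l := l) (R := R)]
      simp
    · rw [map_add, map_prod]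
      rw [Finset.prod_congr rfl fun l (_ : l ∈ Finset.univ) => const_ww hB' (l := l) (R := R)]
      simp
    · intro d hd
      rw [map_add, map_add, hP d hd]
  -- term 2a
  have t2 : Ceq (n + 1) (∑ l : Fin r, uu R B l * gg R B l)
      (∑ l : Fin r, uu R B' l * gg R B' l) :=
    Ceq.sum fun l _ => Ceq.mulo (const_uu hB) (const_uu hB') (const_gg hB) (const_gg hB')
      (Ceq_uu h) (hgg l)
  -- term 2b
  have t3 : Ceq (n + 1) (EE R B) (EE R B') := by
    have e1 : EE R B = (∏ l : Fin r, (1 + gg R B l)) - 1 - ∑ l : Fin r, gg R B l := by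
      rw [EE, Finset.prod_congr rfl fun l _ => ww_eq_one_add_gg hB l]
    have e1' : EE R B' = (∏ l : Fin r, (1 + gg R B' l)) - 1 - ∑ l : Fin r, gg R B' l := by
      rw [EE, Finset.prod_congr rfl fun l _ => ww_eq_one_add_gg hB' l]
    rw [e1, e1']
    exact Ceq_E (fun l => const_gg hB) (fun l => const_gg hB') hgg Finset.univ
  intro d hd
  rw [Phi_decomp K M R hB, Phi_decomp K M R hB']
  simp only [map_add, coeff_C_mul]
  rw [t1 d hd, t2 d hd, t3 d hd]

section Deg2

lemma exists_pos_of_dg {d : Fin r →₀ ℕ} (h : 1 ≤ dg d) : ∃ l, 1 ≤ d l := by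
  by_contra hc
  push_neg at hc
  have : d = 0 := by ext i; exact Nat.lt_one_iff.mp (hc i)
  rw [this, dg_zero] at h
  omega

lemma sub_single_add {d : Fin r →₀ ℕ} {l : Fin r} (hl : 1 ≤ d l) :
    Finsupp.single l 1 + (d - Finsupp.single l 1) = d := by
  apply add_tsub_cancel_of_le
  exact (Finsupp.single_le_iff).mpr hl

lemma dg_sub_single {d : Fin r →₀ ℕ} {l : Fin r} (hl : 1 ≤ d l) :
    dg (d - Finsupp.single l 1) + 1 = dg d := by
  have h := congrArg dg (sub_single_add hl)
  rw [dg_add, dg_single] at h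
  omega

lemma classify2 {d : Fin r →₀ ℕ} (h : dg d = 2) :
    ∃ a b : Fin r, d = Finsupp.single a 1 + Finsupp.single b 1 := by
  obtain ⟨a, ha⟩ := exists_pos_of_dg (d := d) (by omega)
  have h1 := sub_single_add ha
  have h2 := dg_sub_single ha
  obtain ⟨b, hb⟩ := exists_pos_of_dg (d := d - Finsupp.single a 1) (by omega)
  have h3 := sub_single_add hb
  have h4 := dg_sub_single hb
  have h5 : dg (d - Finsupp.single a 1 - Finsupp.single b 1) = 0 := by omega
  have hz : d - Finsupp.single a 1 - Finsupp.single b 1 = 0 := eq_zero_of_dg _ h5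
  rw [hz, add_zero] at h3
  exact ⟨a, b, by rw [← h1, ← h3]⟩

lemma pair_inj {a b l m : Fin r}
    (h : Finsupp.single a 1 + Finsupp.single b 1 =
      Finsupp.single l 1 + Finsupp.single m 1) :
    (l = a ∧ m = b) ∨ (l = b ∧ m = a) := by
  classical
  by_cases hla : l = a
  · subst hla
    have hcan := add_left_cancel h
    exact Or.inl ⟨rfl, (Finsupp.single_left_injective one_ne_zero hcan).symm⟩
  · have hbl : b = l := by
      have h1 : 1 ≤ ((Finsupp.single l 1 + Finsupp.single m 1 : Fin r →₀ ℕ)) l := by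
        rw [Finsupp.add_apply, Finsupp.single_eq_same]; omega
      rw [← h] at h1
      rw [Finsupp.add_apply, Finsupp.single_apply, Finsupp.single_apply] at h1
      by_cases haL : a = l
      · exact absurd haL.symm hla
      by_cases hbL : b = l
      · exact hbL
      · rw [if_neg haL, if_neg hbL] at h1; omega
    subst hbl
    rw [add_comm (Finsupp.single a 1)] at h
    have hcan := add_left_cancel h
    exact Or.inr ⟨rfl, (Finsupp.single_left_injective one_ne_zero hcan).symm⟩

lemma sum_ind_pair (a b : Fin r) :
    (∑ l : Fin r, ∑ m : Fin r, (if l = a ∧ m = b then (1 : ℝ) else 0)) = 1 := by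
  classical
  have inner : ∀ l : Fin r,
      (∑ m : Fin r, (if l = a ∧ m = b then (1 : ℝ) else 0)) =
        if l = a then 1 else 0 := by
    intro l
    by_cases hl : l = a
    · simp [hl]
    · simp [hl]
  rw [Finset.sum_congr rfl fun l _ => inner l]
  simp

lemma counting {d : Fin r →₀ ℕ} (h : dg d = 2) :
    ((∑ l : Fin r, ∑ m : Fin r,
        (if d = Finsupp.single l 1 + Finsupp.single m 1 then (1 : ℝ) else 0)) +
      ∑ l : Fin r, (if d = Finsupp.single l 1 + Finsupp.single l 1 then (1 : ℝ) else 0)) =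
      2 := by
  classical
  obtain ⟨a, b, rfl⟩ := classify2 h
  have hind : ∀ l m : Fin r,
      (if Finsupp.single a 1 + Finsupp.single b 1 =
          Finsupp.single l 1 + Finsupp.single m 1 then (1 : ℝ) else 0) =
        if (l = a ∧ m = b) ∨ (l = b ∧ m = a) then 1 else 0 := by
    intro l m
    refine if_congr ⟨fun hh => pair_inj hh, ?_⟩ rfl rfl
    rintro (⟨rfl, rfl⟩ | ⟨rfl, rfl⟩)
    · rfl
    · rw [add_comm]
  by_cases hab : a = b
  · subst hab
    have e1 : (∑ l : Fin r, ∑ m : Fin r,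
        (if Finsupp.single a 1 + Finsupp.single a 1 =
            Finsupp.single l 1 + Finsupp.single m 1 then (1 : ℝ) else 0)) = 1 := by
      simp only [hind, or_self]
      exact sum_ind_pair a a
    have e2 : (∑ l : Fin r, (if Finsupp.single a 1 + Finsupp.single a 1 =
        Finsupp.single l 1 + Finsupp.single l 1 then (1 : ℝ) else 0)) = 1 := by
      simp only [hind, or_self, and_self]
      simp
    rw [e1, e2]; norm_num
  · have hsplit : ∀ l m : Fin r,
        (if (l = a ∧ m = b) ∨ (l = b ∧ m = a) then (1 : ℝ) else 0) =
          (if l = a ∧ m = b then (1 : ℝ) else 0) +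
            (if l = b ∧ m = a then (1 : ℝ) else 0) := by
      intro l m
      by_cases h1 : l = a ∧ m = b <;> by_cases h2 : l = b ∧ m = a
      · exact absurd (h1.1.symm.trans h2.1) hab
      all_goals simp [h1, h2]
      · intro hh; exact fun hh2 => hab hh
      · intro hh; exact fun hh2 => hab hh2
    have e1 : (∑ l : Fin r, ∑ m : Fin r,
        (if Finsupp.single a 1 + Finsupp.single b 1 =
            Finsupp.single l 1 + Finsupp.single m 1 then (1 : ℝ) else 0)) = 2 := by
      simp only [hind, hsplit, Finset.sum_add_distrib]
      rw [sum_ind_pair a b, sum_ind_pair b a]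
      norm_num
    have e2 : (∑ l : Fin r, (if Finsupp.single a 1 + Finsupp.single b 1 =
        Finsupp.single l 1 + Finsupp.single l 1 then (1 : ℝ) else 0)) = 0 := by
      apply Finset.sum_eq_zero
      intro l _
      rw [if_neg]
      intro hh
      rcases pair_inj hh with ⟨h1, h2⟩ | ⟨h1, h2⟩
      · exact hab (h1.symm.trans h2)
      · exact hab (h2.symm.trans h1)
    rw [e1, e2]; norm_num

end Deg2

lemma Ceq.Cmul {n : ℕ} {a : ℝ} {F G : PS r} (h : Ceq n F G) :
    Ceq n (C (σ := Fin r) (R := ℝ) a * F) (C (σ := Fin r) (R := ℝ) a * G) := by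
  intro d hd
  rw [coeff_C_mul, coeff_C_mul, h d hd]

lemma XX_monomial (l m : Fin r) :
    (X l : PS r) * X m = monomial (R := ℝ) (Finsupp.single l 1 + Finsupp.single m 1) 1 := by
  rw [X_def, X_def, monomial_mul_monomial, one_mul]

lemma CRXX (R : ℝ) (l m : Fin r) :
    (C (σ := Fin r) (R := ℝ) R * X l) * (C (σ := Fin r) (R := ℝ) R * X m) =
      C (σ := Fin r) (R := ℝ) (R ^ 2) * monomial (R := ℝ) (Finsupp.single l 1 + Finsupp.single m 1) 1 := by
  rw [← XX_monomial, pow_two, map_mul]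
  ring

lemma coeff2 (K M R : ℝ) {d : Fin r →₀ ℕ} (hd : dg d = 2) :
    coeff (R := ℝ) d (Phi K M R (0 : PS r)) = 2 * K * M * R ^ 2 := by
  classical
  have h00 : constantCoeff (σ := Fin r) (R := ℝ) (0 : PS r) = 0 := map_zero _
  have hu0 : ∀ l : Fin r, uu R (0 : PS r) l = C (σ := Fin r) (R := ℝ) R * X l := fun l => by
    rw [uu, add_zero]
  have hconst_CRX : ∀ l : Fin r, constantCoeff (σ := Fin r) (R := ℝ) (C (σ := Fin r) (R := ℝ) R * X l) = 0 := by
    intro l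
    rw [map_mul, constantCoeff_X, mul_zero]
  have hg1 : ∀ l : Fin r, Ceq 1 (gg R (0 : PS r) l) (C (σ := Fin r) (R := ℝ) R * X l) := by
    intro l d' hd'
    rw [gg, coeff_mul_low (const_uu h00) d' hd', const_ww h00, mul_one, hu0 l]
  -- coefficient of ∑ uu * gg
  set c1 : ℝ := ∑ l : Fin r,
    (if d = Finsupp.single l 1 + Finsupp.single l 1 then (1 : ℝ) else 0) with hc1
  set c2 : ℝ := ∑ l : Fin r, ∑ m : Fin r,
    (if d = Finsupp.single l 1 + Finsupp.single m 1 then (1 : ℝ) else 0) with hc2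
  have hA : coeff (R := ℝ) d (∑ l : Fin r, uu R (0 : PS r) l * gg R (0 : PS r) l) =
      R ^ 2 * c1 := by
    rw [map_sum, hc1, Finset.mul_sum]
    refine Finset.sum_congr rfl fun l _ => ?_
    have hug : Ceq 2 (uu R (0 : PS r) l * gg R (0 : PS r) l)
        ((C (σ := Fin r) (R := ℝ) R * X l) * (C (σ := Fin r) (R := ℝ) R * X l)) :=
      Ceq.mulo (const_uu h00) (hconst_CRX l) (const_gg h00) (hconst_CRX l)
        (fun d' hd' => by rw [hu0 l]) (hg1 l)
    rw [hug d (le_of_eq hd), CRXX, coeff_C_mul, coeff_monomial]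
  -- coefficient of EE
  have hEE : coeff (R := ℝ) d (EE R (0 : PS r)) = (1/2) * (R ^ 2 * c2 - R ^ 2 * c1) := by
    have e1 : EE R (0 : PS r) =
        (∏ l : Fin r, (1 + gg R (0 : PS r) l)) - 1 - ∑ l : Fin r, gg R (0 : PS r) l := by
      rw [EE, Finset.prod_congr rfl fun l _ => ww_eq_one_add_gg h00 l]
    have step1 : Ceq 2 (EE R (0 : PS r))
        (C (σ := Fin r) (R := ℝ) (1/2) * ((∑ l : Fin r, gg R (0 : PS r) l) ^ 2 -
          ∑ l : Fin r, (gg R (0 : PS r) l) ^ 2)) := by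
      rw [e1]
      exact Ceq_E2 (fun l => const_gg h00) Finset.univ
    have hsum0 : constantCoeff (σ := Fin r) (R := ℝ) (∑ l : Fin r, gg R (0 : PS r) l) = 0 := by
      rw [map_sum]; exact Finset.sum_eq_zero fun l _ => const_gg h00
    have hsum0' : constantCoeff (σ := Fin r) (R := ℝ) (∑ l : Fin r, C (σ := Fin r) (R := ℝ) R * X l) = 0 := by
      rw [map_sum]; exact Finset.sum_eq_zero fun l _ => hconst_CRX l
    have hgsum : Ceq 1 (∑ l : Fin r, gg R (0 : PS r) l)
        (∑ l : Fin r, C (σ := Fin r) (R := ℝ) R * X l) := Ceq.sum fun l _ => hg1 l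
    have hsq : Ceq 2 ((∑ l : Fin r, gg R (0 : PS r) l) ^ 2)
        ((∑ l : Fin r, C (σ := Fin r) (R := ℝ) R * X l) ^ 2) := by
      rw [pow_two, pow_two]
      exact Ceq.mulo hsum0 hsum0' hsum0 hsum0' hgsum hgsum
    have hsq2 : Ceq 2 (∑ l : Fin r, (gg R (0 : PS r) l) ^ 2)
        (∑ l : Fin r, (C (σ := Fin r) (R := ℝ) R * X l) ^ 2) := by
      refine Ceq.sum fun l _ => ?_
      rw [pow_two, pow_two]
      exact Ceq.mulo (const_gg h00) (hconst_CRX l) (const_gg h00) (hconst_CRX l)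
        (hg1 l) (hg1 l)
    have step2 : Ceq 2 (EE R (0 : PS r))
        (C (σ := Fin r) (R := ℝ) (1/2) * ((∑ l : Fin r, C (σ := Fin r) (R := ℝ) R * X l) ^ 2 -
          ∑ l : Fin r, (C (σ := Fin r) (R := ℝ) R * X l) ^ 2)) :=
      step1.trans (Ceq.Cmul (Ceq.sub hsq hsq2))
    rw [step2 d (le_of_eq hd), coeff_C_mul]
    congr 1
    rw [map_sub]
    congr 1
    · -- coeff of (∑ C R * X l)^2
      rw [pow_two, Finset.sum_mul_sum, hc2, Finset.mul_sum, map_sum]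
      refine Finset.sum_congr rfl fun l _ => ?_
      rw [Finset.mul_sum, map_sum]
      refine Finset.sum_congr rfl fun m _ => ?_
      rw [CRXX, coeff_C_mul, coeff_monomial]
    · rw [hc1, Finset.mul_sum, map_sum]
      refine Finset.sum_congr rfl fun l _ => ?_
      rw [pow_two, CRXX, coeff_C_mul, coeff_monomial]
  have hcount : c2 + c1 = 2 := counting hd
  rw [Phi_decomp K M R h00, map_add, coeff_C_mul, coeff_C_mul, zero_mul, map_zero,
    mul_zero, zero_add, map_add, hA, hEE]
  linear_combination (K * M * R ^ 2) * hcount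

lemma const_prod_ww {R : ℝ} {B : PS r} (hB0 : constantCoeff (σ := Fin r) (R := ℝ) B = 0) :
    constantCoeff (σ := Fin r) (R := ℝ) (∏ l : Fin r, ww R B l) = 1 := by
  rw [map_prod]
  rw [Finset.prod_congr rfl fun l (_ : l ∈ Finset.univ) => const_ww hB0 (l := l) (R := R)]
  simp

lemma pos_bound {K M R : ℝ} (hK : 0 < K) (hM : 0 < M) (hR : 0 < R) {B : PS r}
    (hB0 : constantCoeff (σ := Fin r) (R := ℝ) B = 0) (hNN : NN B) {d : Fin r →₀ ℕ} {l0 : Fin r}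
    (hdl : 1 ≤ d l0) (hpos : 0 < coeff (R := ℝ) (d - Finsupp.single l0 1) B) :
    0 < coeff (R := ℝ) d (Phi K M R B) := by
  classical
  have NNu : ∀ l : Fin r, NN (uu R B l) := fun l => NN_uu hR.le hNN
  have NNw : ∀ l : Fin r, NN (ww R B l) := fun l => NN_ww hR.le hB0 hNN
  have NNg : ∀ l : Fin r, NN (gg R B l) := fun l => NN.mul (NNu l) (NNw l)
  -- nonnegativity of -1 + product
  have NNm1P : NN (-1 + ∏ l : Fin r, ww R B l) := by
    intro e
    rw [map_add, map_neg, coeff_one]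
    split
    · next he =>
      subst he
      rw [coeff_zero_eq_constantCoeff_apply, const_prod_ww hB0]
      norm_num
    · rw [neg_zero, zero_add]
      exact NN.prod (fun l _ => NNw l) e
  have hx : 0 ≤ coeff (R := ℝ) d (B * (-1 + ∏ l : Fin r, ww R B l)) :=
    NN.mul hNN NNm1P d
  -- nonnegativity of EE
  have hE : 0 ≤ coeff (R := ℝ) d (EE R B) := by
    have e1 : EE R B =
        (∏ l : Fin r, (1 + gg R B l)) - 1 - ∑ l : Fin r, gg R B l := by
      rw [EE, Finset.prod_congr rfl fun l _ => ww_eq_one_add_gg hB0 l]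
    rw [e1]
    exact NN_E NNg (fun l => const_gg hB0) Finset.univ d
  -- lower bound on the sum term
  have hmem : (Finsupp.single l0 1, d - Finsupp.single l0 1) ∈
      Finset.HasAntidiagonal.antidiagonal d := by
    rw [Finset.HasAntidiagonal.mem_antidiagonal]
    exact sub_single_add hdl
  have hcu : 0 < coeff (R := ℝ) (Finsupp.single l0 1) (uu R B l0) := by
    rw [coeff_uu, coeff_X, if_pos rfl]
    have := hNN (Finsupp.single l0 1)
    nlinarith
  have hcg : 0 < coeff (R := ℝ) (d - Finsupp.single l0 1) (gg R B l0) := by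
    have hmem' : ((d - Finsupp.single l0 1, (0 : Fin r →₀ ℕ))) ∈
        Finset.HasAntidiagonal.antidiagonal (d - Finsupp.single l0 1) := by
      rw [Finset.HasAntidiagonal.mem_antidiagonal, add_zero]
    have hlow : coeff (R := ℝ) (d - Finsupp.single l0 1) (uu R B l0) *
        coeff (R := ℝ) (0 : Fin r →₀ ℕ) (ww R B l0) ≤
        coeff (R := ℝ) (d - Finsupp.single l0 1) (gg R B l0) := by
      rw [gg, coeff_mul]
      exact Finset.single_le_sum
        (fun p _ => mul_nonneg (NNu l0 p.1) (NNw l0 p.2)) hmem'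
    have hw0 : coeff (R := ℝ) (0 : Fin r →₀ ℕ) (ww R B l0) = 1 := by
      rw [coeff_zero_eq_constantCoeff_apply, const_ww hB0]
    have hupos : 0 < coeff (R := ℝ) (d - Finsupp.single l0 1) (uu R B l0) := by
      rw [coeff_uu]
      have hX : 0 ≤ coeff (R := ℝ) (d - Finsupp.single l0 1) (X l0 : PS r) := by
        rw [coeff_X]; split <;> norm_num
      nlinarith
    rw [hw0, mul_one] at hlow
    linarith
  have hz : 0 < coeff (R := ℝ) d (∑ l : Fin r, uu R B l * gg R B l) := by
    rw [map_sum]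
    have h1 : coeff (R := ℝ) d (uu R B l0 * gg R B l0) ≤
        ∑ l : Fin r, coeff (R := ℝ) d (uu R B l * gg R B l) :=
      Finset.single_le_sum (fun l _ => NN.mul (NNu l) (NNg l) d) (Finset.mem_univ l0)
    have h2 : coeff (R := ℝ) (Finsupp.single l0 1) (uu R B l0) *
        coeff (R := ℝ) (d - Finsupp.single l0 1) (gg R B l0) ≤
        coeff (R := ℝ) d (uu R B l0 * gg R B l0) := by
      rw [coeff_mul]
      exact Finset.single_le_sum
        (fun p _ => mul_nonneg (NNu l0 p.1) (NNg l0 p.2)) hmem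
    nlinarith
  rw [Phi_decomp K M R hB0, map_add, coeff_C_mul, coeff_C_mul, map_add]
  nlinarith [mul_pos hK hM]
end
end Stmt7

open Stmt7 in
/-- The formal power series `A(X) = ∑_{|α|≥2} A_α X^α` satisfying
`A = 2K·A·(-1 + ∏_λ (1 - R(X^λ + A))⁻¹) + 2KM·(-1 - R(X¹+⋯+X^r + rA) + ∏_λ (1 - R(X^λ + A))⁻¹)`
has uniquely determined coefficients, all of which are positive in degrees `≥ 2`;
in degree `2` they all equal `2KMR²`. -/
theorem stmt7 {r : ℕ} (K M R : ℝ) (hK : 0 < K) (hM : 0 < M) (hR : 0 < R)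
    (A : MvPowerSeries (Fin r) ℝ)
    (hlow : ∀ d : Fin r →₀ ℕ, (∑ i, d i) ≤ 1 → MvPowerSeries.coeff (R := ℝ) d A = 0)
    (heq : A =
      2 * MvPowerSeries.C (σ := Fin r) (R := ℝ) K * A *
          (-1 + ∏ lam : Fin r,
            (1 - MvPowerSeries.C (σ := Fin r) (R := ℝ) R * (MvPowerSeries.X lam + A))⁻¹) +
        2 * MvPowerSeries.C (σ := Fin r) (R := ℝ) K * MvPowerSeries.C (σ := Fin r) (R := ℝ) M *
          (-1 - MvPowerSeries.C (σ := Fin r) (R := ℝ) R *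
              ((∑ lam : Fin r, MvPowerSeries.X lam) + MvPowerSeries.C (σ := Fin r) (R := ℝ) (r : ℝ) * A) +
            ∏ lam : Fin r,
              (1 - MvPowerSeries.C (σ := Fin r) (R := ℝ) R * (MvPowerSeries.X lam + A))⁻¹)) :
    (∀ A' : MvPowerSeries (Fin r) ℝ,
      (∀ d : Fin r →₀ ℕ, (∑ i, d i) ≤ 1 → MvPowerSeries.coeff (R := ℝ) d A' = 0) →
      (A' =
        2 * MvPowerSeries.C (σ := Fin r) (R := ℝ) K * A' *
            (-1 + ∏ lam : Fin r,
              (1 - MvPowerSeries.C (σ := Fin r) (R := ℝ) R * (MvPowerSeries.X lam + A'))⁻¹) +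
          2 * MvPowerSeries.C (σ := Fin r) (R := ℝ) K * MvPowerSeries.C (σ := Fin r) (R := ℝ) M *
            (-1 - MvPowerSeries.C (σ := Fin r) (R := ℝ) R *
                ((∑ lam : Fin r, MvPowerSeries.X lam) +
                  MvPowerSeries.C (σ := Fin r) (R := ℝ) (r : ℝ) * A') +
              ∏ lam : Fin r,
                (1 - MvPowerSeries.C (σ := Fin r) (R := ℝ) R * (MvPowerSeries.X lam + A'))⁻¹)) →
      A' = A) ∧
    (∀ d : Fin r →₀ ℕ, 2 ≤ (∑ i, d i) → 0 < MvPowerSeries.coeff (R := ℝ) d A) ∧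
    (∀ d : Fin r →₀ ℕ, (∑ i, d i) = 2 → MvPowerSeries.coeff (R := ℝ) d A = 2 * K * M * R ^ 2) := by
  classical
  have constA : MvPowerSeries.constantCoeff (σ := Fin r) (R := ℝ) A = 0 := by
    rw [← MvPowerSeries.coeff_zero_eq_constantCoeff_apply]
    exact hlow 0 (by simp)
  have heqPhi : A = Stmt7.Phi K M R A := heq
  -- degree 2 coefficients
  have part3 : ∀ d : Fin r →₀ ℕ, (∑ i, d i) = 2 →
      MvPowerSeries.coeff (R := ℝ) d A = 2 * K * M * R ^ 2 := by
    intro d hd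
    have h01 : Ceq 1 A (0 : MvPowerSeries (Fin r) ℝ) := by
      intro e he
      rw [hlow e he]
      simp
    have hm := main_congr K M R constA (map_zero _) h01
    have hd2 : dg d ≤ 1 + 1 := le_of_eq hd
    calc MvPowerSeries.coeff (R := ℝ) d A
        = MvPowerSeries.coeff (R := ℝ) d (Phi K M R A) := by conv_lhs => rw [heqPhi]
      _ = MvPowerSeries.coeff (R := ℝ) d (Phi K M R 0) := hm d hd2
      _ = 2 * K * M * R ^ 2 := coeff2 K M R hd
  -- positivity
  have part2 : ∀ d : Fin r →₀ ℕ, 2 ≤ (∑ i, d i) →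
      0 < MvPowerSeries.coeff (R := ℝ) d A := by
    suffices H : ∀ n, ∀ d : Fin r →₀ ℕ, dg d = n → 2 ≤ n →
        0 < MvPowerSeries.coeff (R := ℝ) d A by
      intro d hd
      exact H _ d rfl hd
    intro n
    induction n using Nat.strong_induction_on with
    | _ n IH =>
      intro d hdn h2
      rcases eq_or_lt_of_le h2 with he | h3
      · have hd2 : dg d = 2 := by omega
        rw [part3 d hd2]
        positivity
      · -- n ≥ 3 : use truncation
        set T : MvPowerSeries (Fin r) ℝ :=
          fun e => if dg e < n then MvPowerSeries.coeff (R := ℝ) e A else 0 with hTdef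
        have coeffT : ∀ e : Fin r →₀ ℕ, MvPowerSeries.coeff (R := ℝ) e T =
            if dg e < n then MvPowerSeries.coeff (R := ℝ) e A else 0 := fun e => rfl
        have constT : MvPowerSeries.constantCoeff (σ := Fin r) (R := ℝ) T = 0 := by
          rw [← MvPowerSeries.coeff_zero_eq_constantCoeff_apply, coeffT]
          split
          · exact hlow 0 (by simp)
          · rfl
        have hNNT : NN T := by
          intro e
          rw [coeffT]
          split
          · next hlt =>
            rcases le_or_gt (dg e) 1 with h1 | hge
            · rw [hlow e h1]
            · exact (IH (dg e) hlt e rfl (by omega)).le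
          · exact le_refl 0
        have hceq : Ceq (n - 1) A T := by
          intro e he
          rw [coeffT, if_pos (by omega)]
        have hm := main_congr K M R constA constT hceq
        have hn1 : n - 1 + 1 = n := by omega
        rw [hn1] at hm
        obtain ⟨l0, hl0⟩ := exists_pos_of_dg (d := d) (by omega)
        have hsub := dg_sub_single hl0
        have hposT : 0 < MvPowerSeries.coeff (R := ℝ) (d - Finsupp.single l0 1) T := by
          rw [coeffT, if_pos (by omega)]
          exact IH (dg (d - Finsupp.single l0 1)) (by omega) _ rfl (by omega)
        have hfin := pos_bound hK hM hR constT hNNT hl0 hposT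
        calc (0 : ℝ) < MvPowerSeries.coeff (R := ℝ) d (Phi K M R T) := hfin
          _ = MvPowerSeries.coeff (R := ℝ) d (Phi K M R A) := (hm d (le_of_eq hdn)).symm
          _ = MvPowerSeries.coeff (R := ℝ) d A := by conv_rhs => rw [heqPhi]
  -- uniqueness
  have part1 : ∀ A' : MvPowerSeries (Fin r) ℝ,
      (∀ d : Fin r →₀ ℕ, (∑ i, d i) ≤ 1 → MvPowerSeries.coeff (R := ℝ) d A' = 0) →
      (A' =
        2 * MvPowerSeries.C (σ := Fin r) (R := ℝ) K * A' *
            (-1 + ∏ lam : Fin r,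
              (1 - MvPowerSeries.C (σ := Fin r) (R := ℝ) R * (MvPowerSeries.X lam + A'))⁻¹) +
          2 * MvPowerSeries.C (σ := Fin r) (R := ℝ) K * MvPowerSeries.C (σ := Fin r) (R := ℝ) M *
            (-1 - MvPowerSeries.C (σ := Fin r) (R := ℝ) R *
                ((∑ lam : Fin r, MvPowerSeries.X lam) +
                  MvPowerSeries.C (σ := Fin r) (R := ℝ) (r : ℝ) * A') +
              ∏ lam : Fin r,
                (1 - MvPowerSeries.C (σ := Fin r) (R := ℝ) R * (MvPowerSeries.X lam + A'))⁻¹)) →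
      A' = A := by
    intro A' hlow' heq'
    have constA' : MvPowerSeries.constantCoeff (σ := Fin r) (R := ℝ) A' = 0 := by
      rw [← MvPowerSeries.coeff_zero_eq_constantCoeff_apply]
      exact hlow' 0 (by simp)
    have heqPhi' : A' = Stmt7.Phi K M R A' := heq'
    have key : ∀ n, Ceq n A' A := by
      intro n
      induction n with
      | zero =>
        intro e he
        have he1 : dg e ≤ 1 := he.trans (Nat.zero_le 1)
        rw [hlow' e he1, hlow e he1]
      | succ n ih =>
        have hm := main_congr K M R constA' constA ih
        intro e he
        calc MvPowerSeries.coeff (R := ℝ) e A'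
            = MvPowerSeries.coeff (R := ℝ) e (Phi K M R A') := by conv_lhs => rw [heqPhi']
          _ = MvPowerSeries.coeff (R := ℝ) e (Phi K M R A) := hm e he
          _ = MvPowerSeries.coeff (R := ℝ) e A := by conv_rhs => rw [heqPhi]
    exact MvPowerSeries.ext fun e => key (dg e) e le_rfl
  exact ⟨part1, part2, part3⟩
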